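/- There is an absolute constant c > 0 such that for all integers N ≥ 1 and M ≥ 4, there exists a 2D SLP of size at most c·(log₂ N + log₂ M) deriving the 2D string C_{N,M}. -/

import Mathlib

/-!
## Two-dimensional strings.
A 2D string over alphabet `A` of size `h × w` is represented canonically:
`f i j` is `some` of the character in (0-indexed) row `i`, column `j` when
`i < h` and `j < w`, and `none` outside of the rectangle.  All operations
below produce such canonical representations, so equality of 2D strings
built from them coincides with equality of the dimensions and of all entries.
-/
structure Str2 (A : Type) where
  h : ℕ
  w : ℕ
  f : ℕ → ℕ → Option A

namespace Str2

variable {A : Type}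

/-- Canonical constructor: pads with `none` outside of the `h × w` rectangle. -/
def mk' (h w : ℕ) (g : ℕ → ℕ → Option A) : Str2 A :=
  ⟨h, w, fun i j => if i < h ∧ j < w then g i j else none⟩

/-- The empty 2D string. -/
def empty : Str2 A := ⟨0, 0, fun _ _ => none⟩

/-- The `1 × 1` 2D string consisting of a single character. -/
def single (a : A) : Str2 A := mk' 1 1 fun _ _ => some a

/-- Horizontal concatenation `S ⊞ T` (meaningful when the heights agree). -/
def hcat (S T : Str2 A) : Str2 A :=
  mk' S.h (S.w + T.w) fun i j => if j < S.w then S.f i j else T.f i (j - S.w)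

/-- Vertical concatenation `S ⊟ T` (meaningful when the widths agree). -/
def vcat (S T : Str2 A) : Str2 A :=
  mk' (S.h + T.h) S.w fun i j => if i < S.h then S.f i j else T.f (i - S.h) j

/-- Horizontal concatenation `S₁ ⊞ S₂ ⊞ ⋯ ⊞ S_k` of a list of 2D strings. -/
def hcatList : List (Str2 A) → Str2 A
  | [] => empty
  | S :: rest => rest.foldl hcat S

/-- Vertical concatenation `S₁ ⊟ S₂ ⊟ ⋯ ⊟ S_k` of a list of 2D strings. -/
def vcatList : List (Str2 A) → Str2 A
  | [] => empty
  | S :: rest => rest.foldl vcat S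

/-- The transpose. -/
def transpose (S : Str2 A) : Str2 A := mk' S.w S.h fun i j => S.f j i

/-- The `i`-th row (0-indexed) of `S`, as a `1 × w` 2D string. -/
def rowStr (S : Str2 A) (i : ℕ) : Str2 A := mk' 1 S.w fun _ j => S.f i j

/-- The `j`-th column (0-indexed) of `S`, read top to bottom, as a `1 × h` 2D string. -/
def colStr (S : Str2 A) (j : ℕ) : Str2 A := mk' 1 S.h fun _ i => S.f i j

/-- A height-one 2D string, viewed as an ordinary (1D) string, i.e. a list. -/
def toList (S : Str2 A) : List A := (List.range S.w).filterMap fun j => S.f 0 j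

/-- An ordinary (1D) string viewed as a height-one 2D string. -/
def ofList (l : List A) : Str2 A := mk' 1 l.length fun _ j => l[j]?

/-- The concatenation of all rows of `S` from top to bottom,
as a height-one 2D string of width `h * w`. -/
def rowsConcat (S : Str2 A) : Str2 A :=
  mk' 1 (S.h * S.w) fun _ j => S.f (j / S.w) (j % S.w)

end Str2

/-- The right-hand side of a production of a 2D SLP: a single character,
a horizontal concatenation of two nonterminals, or a vertical concatenation
of two nonterminals. -/
inductive Rhs2 (A V : Type) where
  | chr : A → Rhs2 A V
  | horiz : V → V → Rhs2 A V
  | vert : V → V → Rhs2 A V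

/-- A two-dimensional straight-line program over the alphabet `A`:
a finite set `V` of nonterminals, a starting nonterminal, and a production
map `rhs`.  Acyclicity of the relation "appears in the right-hand side of"
is witnessed by the function `rank`, which strictly decreases from the
left-hand side of each production to the nonterminals on its right-hand side. -/
structure SLP2 (A : Type) where
  V : Type
  fintypeV : Fintype V
  start : V
  rhs : V → Rhs2 A V
  rank : V → ℕ
  rank_horiz : ∀ {X Y Z}, rhs X = Rhs2.horiz Y Z → rank Y < rank X ∧ rank Z < rank X
  rank_vert : ∀ {X Y Z}, rhs X = Rhs2.vert Y Z → rank Y < rank X ∧ rank Z < rank X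

namespace SLP2

variable {A : Type}

/-- Fuel-based evaluation of expansions (with enough fuel it computes the
unique expansion of a nonterminal). -/
def expAux (G : SLP2 A) : ℕ → G.V → Str2 A
  | 0, _ => Str2.empty
  | n + 1, X =>
    match G.rhs X with
    | .chr a => Str2.single a
    | .horiz Y Z => (G.expAux n Y).hcat (G.expAux n Z)
    | .vert Y Z => (G.expAux n Y).vcat (G.expAux n Z)

/-- The (unique) expansion of a nonterminal `X`: since `rank` strictly
decreases along productions, fuel `rank X + 1` always suffices. -/
def expNT (G : SLP2 A) (X : G.V) : Str2 A := G.expAux (G.rank X + 1) X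

/-- The 2D string derived by the SLP. -/
def exp (G : SLP2 A) : Str2 A := G.expNT G.start

/-- Fuel-based computation of the depth of the derivation tree below a
nonterminal (a node labeled by a production `chr σ` has a single leaf child). -/
def depthAux (G : SLP2 A) : ℕ → G.V → ℕ
  | 0, _ => 0
  | n + 1, X =>
    match G.rhs X with
    | .chr _ => 1
    | .horiz Y Z => 1 + max (G.depthAux n Y) (G.depthAux n Z)
    | .vert Y Z => 1 + max (G.depthAux n Y) (G.depthAux n Z)

/-- The depth of the derivation tree below nonterminal `X`. -/
def depthNT (G : SLP2 A) (X : G.V) : ℕ := G.depthAux (G.rank X + 1) X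

/-- The depth of the SLP: the depth of its derivation tree. -/
def depth (G : SLP2 A) : ℕ := G.depthNT G.start

/-- The size of the SLP: the total number of symbols on the right-hand
sides of all productions. -/
def size (G : SLP2 A) : ℕ :=
  letI := G.fintypeV
  ∑ X : G.V, (match G.rhs X with
    | .chr _ => 1
    | .horiz _ _ => 2
    | .vert _ _ => 2)

/-- The number of nonterminals of the SLP. -/
def numNT (G : SLP2 A) : ℕ :=
  letI := G.fintypeV
  Fintype.card G.V

/-- Well-formedness: dimensions match in every production, i.e. in a
horizontal concatenation both arguments have equal heights, and in a
vertical concatenation both arguments have equal widths. -/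
def WF (G : SLP2 A) : Prop :=
  ∀ X : G.V,
    match G.rhs X with
    | .chr _ => True
    | .horiz Y Z => (G.expNT Y).h = (G.expNT Z).h
    | .vert Y Z => (G.expNT Y).w = (G.expNT Z).w

/-- A 1D SLP: a 2D SLP that uses only horizontal concatenations and derives
a string of height `1`. -/
def OneDim (G : SLP2 A) : Prop :=
  (∀ X Y Z, G.rhs X ≠ Rhs2.vert Y Z) ∧ (G.exp).h = 1

end SLP2
/-- The alphabet `{0, 1, $}`. -/
inductive Alpha3 : Type where
  | zero : Alpha3
  | one : Alpha3
  | dollar : Alpha3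
deriving DecidableEq

instance : Fintype Alpha3 :=
  ⟨{Alpha3.zero, Alpha3.one, Alpha3.dollar}, fun x => by cases x <;> simp⟩

/-- For `N = 2^n`, the 2D string `Bin_N` of size `N × (n+2)` whose `i`-th row
(1-indexed) is the `n`-bit binary representation (most significant bit first)
of `i - 1`, surrounded by one `$` symbol on each side. -/
def binStr (n : ℕ) : Str2 Alpha3 :=
  Str2.mk' (2 ^ n) (n + 2) fun i j =>
    some (if j = 0 ∨ j = n + 1 then Alpha3.dollar
      else if Nat.testBit i (n - j) then Alpha3.one else Alpha3.zero)

/-- For `N = 2^n`, the 2D string `ShiftBin_N` of size `2N × N(n+2)`: for every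
`i ∈ [0..N-1]`, the columns `i(n+2)+1` through `(i+1)(n+2)` (1-indexed) consist
of `i` rows filled with `0`'s, followed by a copy of `Bin_N`, followed by
`N - i` rows filled with `0`'s. -/
def shiftBinStr (n : ℕ) : Str2 Alpha3 :=
  Str2.mk' (2 * 2 ^ n) (2 ^ n * (n + 2)) fun r c =>
    let i := c / (n + 2)
    if i ≤ r ∧ r < i + 2 ^ n then (binStr n).f (r - i) (c % (n + 2)) else some Alpha3.zero

/-- A binary string `b`, surrounded by one `$` symbol on each side, as a string
over an alphabet with distinguished symbols `z` (zero), `o` (one), `d` (dollar). -/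
def dollarWrap {A : Type} (z o d : A) (b : List Bool) : List A :=
  d :: (b.map fun x => if x then o else z) ++ [d]

/-- The exponent of `M'`: the largest `m` such that `M' = 2^m` satisfies
`M' * (log₂ M' + 2) ≤ M / 2`, i.e. `2 * 2^m * (m + 2) ≤ M`. -/
def mExp (M : ℕ) : ℕ := Nat.findGreatest (fun m => 2 * 2 ^ m * (m + 2) ≤ M) M

/-- The 2D string `C_{N,M}` of size `N × M`: with `M'` the largest power of two
such that `M' * (log₂ M' + 2) ≤ M / 2` and `B = ShiftBin_{M'}` (of size
`2M' × M'(log₂ M' + 2)`), it consists of a left block of `⌊N/(2M')⌋` vertically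
concatenated copies of `B` padded below with `0`'s to height `N`; to its right,
a right block of `M'` rows of `0`'s followed by `⌊(N-M')/(2M')⌋` vertically
concatenated copies of `B`, padded below with `0`'s to height `N`; and columns
of `0`'s padding the total width to `M`. -/
def gadgetC (N M : ℕ) : Str2 Alpha3 :=
  let n := mExp M
  let M' := 2 ^ n
  let W := M' * (n + 2)
  Str2.mk' N M fun r c =>
    if c < W then
      (if r < 2 * M' * (N / (2 * M')) then (shiftBinStr n).f (r % (2 * M')) c
       else some Alpha3.zero)
    else if c < 2 * W then
      (if M' ≤ r ∧ r < M' + 2 * M' * ((N - M') / (2 * M'))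
       then (shiftBinStr n).f ((r - M') % (2 * M')) (c - W)
       else some Alpha3.zero)
    else some Alpha3.zero


/-!
A term over `⊞` and `⊟` with `k` distinct subterms is a 2D SLP of size at most `2k`, so it suffices
to derive `C_{N,M}` by a term with `O(log N + log M)` distinct subterms, sharing freely. Doubling
gives `q` stacked copies of a term, or a constant rectangle, with `O(log q)` new subterms.
`Bin_{2^k}` without its leading `$` column is `T_k`, where `T_{k+1} = (0 ⊞ T_k) ⊟ (1 ⊞ T_k)`, and the
first `2^k` column blocks `D_k` of `ShiftBin_{2^n}` satisfy `D_{k+1} = (D_k ⊟ 0) ⊞ (0 ⊟ D_k)`; each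
step adds five subterms, so `ShiftBin_{M'}` costs `O(log M')`. Finally `C_{N,M}` consists of two
vertical tilings by `ShiftBin_{M'}` and rectangles of `0`s.
-/

namespace Str2

variable {A : Type}

@[simp] theorem mk'_h (h w : ℕ) (g : ℕ → ℕ → Option A) : (mk' h w g).h = h := rfl
@[simp] theorem mk'_w (h w : ℕ) (g : ℕ → ℕ → Option A) : (mk' h w g).w = w := rfl
theorem mk'_f (h w : ℕ) (g : ℕ → ℕ → Option A) (i j : ℕ) :
    (mk' h w g).f i j = if i < h ∧ j < w then g i j else none := rfl

@[simp] theorem hcat_h (S T : Str2 A) : (S.hcat T).h = S.h := rfl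
@[simp] theorem hcat_w (S T : Str2 A) : (S.hcat T).w = S.w + T.w := rfl
@[simp] theorem vcat_h (S T : Str2 A) : (S.vcat T).h = S.h + T.h := rfl
@[simp] theorem vcat_w (S T : Str2 A) : (S.vcat T).w = S.w := rfl

theorem mk'_congr {h h' w w' : ℕ} {g g' : ℕ → ℕ → Option A} (hh : h = h') (hw : w = w')
    (hg : ∀ i j, i < h → j < w → g i j = g' i j) : mk' h w g = mk' h' w' g' := by
  subst hh hw
  simp only [mk', mk.injEq, true_and]
  funext i j
  split_ifs with hij
  exacts [hg i j hij.1 hij.2, rfl]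

/-- `S` is `none` outside its `S.h × S.w` rectangle, as every string built by `mk'` is. -/
def IsCanonical (S : Str2 A) : Prop := mk' S.h S.w S.f = S

theorem isCanonical_mk' (h w : ℕ) (g : ℕ → ℕ → Option A) : (mk' h w g).IsCanonical :=
  mk'_congr rfl rfl fun i j hi hj => by simp_all [mk'_f]

def const (a : A) (h w : ℕ) : Str2 A := mk' h w fun _ _ => some a

@[simp] theorem const_h (a : A) (h w : ℕ) : (const a h w).h = h := rfl
@[simp] theorem const_w (a : A) (h w : ℕ) : (const a h w).w = w := rfl

theorem const_vcat_const (a : A) (h₁ h₂ w : ℕ) :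
    (const a h₁ w).vcat (const a h₂ w) = const a (h₁ + h₂) w :=
  mk'_congr rfl rfl fun i j hi hj => by
    simp only [const_h, const_w] at hi hj
    simp only [const, mk'_f, mk'_h]
    grind

theorem const_hcat_const (a : A) (h w₁ w₂ : ℕ) :
    (const a h w₁).hcat (const a h w₂) = const a h (w₁ + w₂) :=
  mk'_congr rfl rfl fun i j hi hj => by
    simp only [const_h, const_w] at hi hj
    simp only [const, mk'_f, mk'_w]
    grind

theorem IsCanonical.vcat_const_zero {S : Str2 A} (hS : S.IsCanonical) (a : A) :
    S.vcat (const a 0 S.w) = S := by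
  conv_rhs => rw [← hS]
  exact mk'_congr (Nat.add_zero _) rfl fun i j hi _ => by
    simp only [const_h, add_zero] at hi
    simp [hi]

theorem IsCanonical.const_zero_vcat {S : Str2 A} (hS : S.IsCanonical) (a : A) :
    (const a 0 S.w).vcat S = S := by
  conv_rhs => rw [← hS]
  exact mk'_congr (Nat.zero_add _) rfl fun i j _ _ => by simp

theorem IsCanonical.hcat_const_zero {S : Str2 A} (hS : S.IsCanonical) (a : A) :
    S.hcat (const a S.h 0) = S := by
  conv_rhs => rw [← hS]
  exact mk'_congr rfl (Nat.add_zero _) fun i j _ hj => by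
    simp only [const_w, add_zero] at hj
    simp [hj]

def vrepeat (S : Str2 A) (k : ℕ) : Str2 A := mk' (S.h * k) S.w fun i j => S.f (i % S.h) j

@[simp] theorem vrepeat_h (S : Str2 A) (k : ℕ) : (vrepeat S k).h = S.h * k := rfl
@[simp] theorem vrepeat_w (S : Str2 A) (k : ℕ) : (vrepeat S k).w = S.w := rfl

theorem IsCanonical.vrepeat_one {S : Str2 A} (hS : S.IsCanonical) : vrepeat S 1 = S := by
  conv_rhs => rw [← hS]
  exact mk'_congr (mul_one _) rfl fun i j hi _ => by rw [Nat.mod_eq_of_lt (by simpa using hi)]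

theorem vrepeat_add (S : Str2 A) (a b : ℕ) :
    vrepeat S (a + b) = (vrepeat S a).vcat (vrepeat S b) :=
  mk'_congr (mul_add _ _ _) rfl fun i j hi hj => by
    simp only [vrepeat, mk'_f] at hi hj ⊢
    by_cases hia : i < S.h * a
    · simp [hia, hj]
    · obtain ⟨i, rfl⟩ : ∃ i', i = S.h * a + i' := ⟨i - S.h * a, by omega⟩
      have hib : i < S.h * b := by rw [mul_add] at hi; omega
      simp [hia, hib, hj, Nat.add_mod]

/-- The left and right blocks of `C_{N,M}` are `tiles 0 ShiftBin_{M'} a q N` with `a = 0` and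
`a = M'`. -/
def tiles (z : A) (B : Str2 A) (a q N : ℕ) : Str2 A :=
  mk' N B.w fun r c => if a ≤ r ∧ r < a + B.h * q then B.f ((r - a) % B.h) c else some z

theorem tiles_zero (z : A) (B : Str2 A) (a N : ℕ) : tiles z B a 0 N = const z N B.w :=
  mk'_congr rfl rfl fun r c _ _ => by simp

theorem tiles_eq_vcat (z : A) (B : Str2 A) {a q N : ℕ} (hN : a + B.h * q ≤ N) :
    tiles z B a q N =
      ((const z a B.w).vcat (B.vrepeat q)).vcat (const z (N - a - B.h * q) B.w) := by
  refine mk'_congr (by simp only [vcat_h, const_h, vrepeat_h]; lia) rfl fun r c hr hc => ?_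
  simp only [Str2.vcat, const, vrepeat, mk'_f, mk'_h, mk'_w]
  grind

end Str2

/-- A term with `k` distinct subterms is an SLP with `k` nonterminals (`Str2Term.toSLP2`). -/
inductive Str2Term (A : Type) : Type where
  | char : A → Str2Term A
  | hcat : Str2Term A → Str2Term A → Str2Term A
  | vcat : Str2Term A → Str2Term A → Str2Term A
deriving DecidableEq

namespace Str2Term

variable {A : Type}

def eval : Str2Term A → Str2 A
  | char a => Str2.single a
  | hcat x y => x.eval.hcat y.eval
  | vcat x y => x.eval.vcat y.eval

def numNodes : Str2Term A → ℕ
  | char _ => 1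
  | hcat x y => x.numNodes + y.numNodes + 1
  | vcat x y => x.numNodes + y.numNodes + 1

def WellFormed : Str2Term A → Prop
  | char _ => True
  | hcat x y => x.eval.h = y.eval.h ∧ x.WellFormed ∧ y.WellFormed
  | vcat x y => x.eval.w = y.eval.w ∧ x.WellFormed ∧ y.WellFormed

theorem isCanonical_eval (e : Str2Term A) : e.eval.IsCanonical := by
  cases e <;> exact Str2.isCanonical_mk' _ _ _

theorem one_le_eval_h : ∀ e : Str2Term A, 1 ≤ e.eval.h
  | char _ => le_rfl
  | hcat x _ => one_le_eval_h x
  | vcat x _ => Nat.le_add_right_of_le (one_le_eval_h x)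

theorem one_le_eval_w : ∀ e : Str2Term A, 1 ≤ e.eval.w
  | char _ => le_rfl
  | hcat x _ => Nat.le_add_right_of_le (one_le_eval_w x)
  | vcat x _ => one_le_eval_w x

variable [DecidableEq A]

def subterms : Str2Term A → Finset (Str2Term A)
  | char a => {char a}
  | hcat x y => insert (hcat x y) (x.subterms ∪ y.subterms)
  | vcat x y => insert (vcat x y) (x.subterms ∪ y.subterms)

theorem mem_subterms_self (e : Str2Term A) : e ∈ e.subterms := by
  cases e <;> simp [subterms]

theorem subterms_subset_of_mem {e e' : Str2Term A} (h : e' ∈ e.subterms) :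
    e'.subterms ⊆ e.subterms := by
  induction e with
  | char a => simp_all [subterms]
  | hcat x y ihx ihy | vcat x y ihx ihy =>
    simp only [subterms, Finset.mem_insert, Finset.mem_union] at h
    rcases h with rfl | h | h
    · exact subset_rfl
    · exact (ihx h).trans (Finset.subset_union_left.trans (Finset.subset_insert _ _))
    · exact (ihy h).trans (Finset.subset_union_right.trans (Finset.subset_insert _ _))

theorem WellFormed.of_mem_subterms {e e' : Str2Term A} (he : e.WellFormed)
    (h : e' ∈ e.subterms) : e'.WellFormed := by
  induction e with
  | char a => simp_all [subterms]
  | hcat x y ihx ihy | vcat x y ihx ihy =>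
    simp only [subterms, Finset.mem_insert, Finset.mem_union] at h
    rcases h with rfl | h | h
    exacts [he, ihx he.2.1 h, ihy he.2.2 h]

theorem mem_subterms_of_hcat_mem {e x y : Str2Term A} (h : hcat x y ∈ e.subterms) :
    x ∈ e.subterms ∧ y ∈ e.subterms :=
  ⟨subterms_subset_of_mem h (by simp [subterms, mem_subterms_self]),
    subterms_subset_of_mem h (by simp [subterms, mem_subterms_self])⟩

theorem mem_subterms_of_vcat_mem {e x y : Str2Term A} (h : vcat x y ∈ e.subterms) :
    x ∈ e.subterms ∧ y ∈ e.subterms :=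
  ⟨subterms_subset_of_mem h (by simp [subterms, mem_subterms_self]),
    subterms_subset_of_mem h (by simp [subterms, mem_subterms_self])⟩

def toSLP2 (e : Str2Term A) : SLP2 A where
  V := e.subterms
  fintypeV := inferInstance
  start := ⟨e, mem_subterms_self e⟩
  rhs
    | ⟨char a, _⟩ => .chr a
    | ⟨hcat x y, h⟩ =>
      .horiz ⟨x, (mem_subterms_of_hcat_mem h).1⟩ ⟨y, (mem_subterms_of_hcat_mem h).2⟩
    | ⟨vcat x y, h⟩ =>
      .vert ⟨x, (mem_subterms_of_vcat_mem h).1⟩ ⟨y, (mem_subterms_of_vcat_mem h).2⟩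
  rank X := X.1.numNodes
  rank_horiz {X Y Z} h := by
    obtain ⟨x | x | x, hx⟩ := X <;> simp only [Rhs2.horiz.injEq, reduceCtorEq] at h
    obtain ⟨rfl, rfl⟩ := h
    simp only [numNodes]
    omega
  rank_vert {X Y Z} h := by
    obtain ⟨x | x | x, hx⟩ := X <;> simp only [Rhs2.vert.injEq, reduceCtorEq] at h
    obtain ⟨rfl, rfl⟩ := h
    simp only [numNodes]
    omega

theorem toSLP2_expAux (e : Str2Term A) {n : ℕ} (x : e.toSLP2.V) (hx : x.1.numNodes ≤ n) :
    e.toSLP2.expAux n x = x.1.eval := by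
  induction n generalizing x with
  | zero => obtain ⟨x | x | x, _⟩ := x <;> simp [numNodes] at hx
  | succ n ih =>
    obtain ⟨x | ⟨x, y⟩ | ⟨x, y⟩, hxy⟩ := x
    · rfl
    · simp only [numNodes] at hx
      exact congrArg₂ Str2.hcat (ih _ (by simp only; omega)) (ih _ (by simp only; omega))
    · simp only [numNodes] at hx
      exact congrArg₂ Str2.vcat (ih _ (by simp only; omega)) (ih _ (by simp only; omega))

theorem toSLP2_expNT (e : Str2Term A) (x : e.toSLP2.V) : e.toSLP2.expNT x = x.1.eval :=
  toSLP2_expAux e x (Nat.le_succ _)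

theorem toSLP2_exp (e : Str2Term A) : e.toSLP2.exp = e.eval :=
  toSLP2_expNT e _

theorem WellFormed.toSLP2_wf {e : Str2Term A} (he : e.WellFormed) : e.toSLP2.WF := by
  rintro ⟨x | ⟨x, y⟩ | ⟨x, y⟩, hxy⟩
  · trivial
  · show (e.toSLP2.expNT _).h = (e.toSLP2.expNT _).h
    convert (he.of_mem_subterms hxy).1 using 2 <;> apply toSLP2_expNT
  · show (e.toSLP2.expNT _).w = (e.toSLP2.expNT _).w
    convert (he.of_mem_subterms hxy).1 using 2 <;> apply toSLP2_expNT

theorem toSLP2_size (e : Str2Term A) : e.toSLP2.size ≤ 2 * e.subterms.card := by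
  let := e.toSLP2.fintypeV
  calc e.toSLP2.size ≤ ∑ _ : e.toSLP2.V, 2 :=
        Finset.sum_le_sum fun X _ => by split <;> omega
    _ = 2 * e.subterms.card := by
      rw [Finset.sum_const, smul_eq_mul, mul_comm, Finset.card_univ]
      exact congrArg _ (Fintype.card_coe _)

/-- Several terms realized in one pool `s` share their common subterms, which `s.card` counts
once. -/
structure Realizes (s : Finset (Str2Term A)) (e : Str2Term A) (S : Str2 A) : Prop where
  eval_eq : e.eval = S
  wellFormed : e.WellFormed
  subterms_subset : e.subterms ⊆ s

variable {s t : Finset (Str2Term A)} {e x y : Str2Term A} {S T : Str2 A}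

theorem Realizes.mono (h : Realizes s e S) (hst : s ⊆ t) : Realizes t e S :=
  ⟨h.eval_eq, h.wellFormed, h.subterms_subset.trans hst⟩

theorem realizes_char (a : A) : Realizes {char a} (char a) (Str2.single a) :=
  ⟨rfl, trivial, subset_rfl⟩

theorem Realizes.hcat (hx : Realizes s x S) (hy : Realizes s y T) (hST : S.h = T.h)
    (hst : s ⊆ t) (hxy : hcat x y ∈ t) : Realizes t (hcat x y) (S.hcat T) where
  eval_eq := by rw [eval, hx.eval_eq, hy.eval_eq]
  wellFormed := ⟨by rw [hx.eval_eq, hy.eval_eq, hST], hx.wellFormed, hy.wellFormed⟩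
  subterms_subset := Finset.insert_subset hxy
    ((Finset.union_subset hx.subterms_subset hy.subterms_subset).trans hst)

theorem Realizes.vcat (hx : Realizes s x S) (hy : Realizes s y T) (hST : S.w = T.w)
    (hst : s ⊆ t) (hxy : vcat x y ∈ t) : Realizes t (vcat x y) (S.vcat T) where
  eval_eq := by rw [eval, hx.eval_eq, hy.eval_eq]
  wellFormed := ⟨by rw [hx.eval_eq, hy.eval_eq, hST], hx.wellFormed, hy.wellFormed⟩
  subterms_subset := Finset.insert_subset hxy
    ((Finset.union_subset hx.subterms_subset hy.subterms_subset).trans hst)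

/-- Repeated doubling: `F k` is reached with `2 log₂ k` new subterms whenever `F (a + b)` is
obtained from `F a` and `F b` by one term constructor `op`. -/
theorem Realizes.exists_of_add {F : ℕ → Str2 A} (op : Str2Term A → Str2Term A → Str2Term A)
    (hop : ∀ {s t x y a b}, Realizes s x (F a) → Realizes s y (F b) → s ⊆ t →
      op x y ∈ t → Realizes t (op x y) (F (a + b)))
    (hx : Realizes s x (F 1)) {k : ℕ} (hk : 1 ≤ k) :
    ∃ t y, s ⊆ t ∧ t.card ≤ s.card + 2 * Nat.log 2 k ∧ Realizes t y (F k) := by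
  induction k using Nat.strong_induction_on with
  | _ k ih =>
    obtain rfl | hk2 := hk.eq_or_lt
    · exact ⟨s, x, subset_rfl, by simp, hx⟩
    obtain ⟨t, y, hst, hcard, hy⟩ := ih (k / 2) (by omega) (by omega)
    have hlog : Nat.log 2 k = Nat.log 2 (k / 2) + 1 := by
      rw [Nat.log_div_base]
      have := Nat.log_pos (b := 2) (by norm_num) hk2
      omega
    let t₁ := insert (op y y) t
    have hyy := hop hy hy (Finset.subset_insert _ t) (Finset.mem_insert_self _ t)
    have ht₁ : t₁.card ≤ t.card + 1 := Finset.card_insert_le _ _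
    rcases Nat.mod_two_eq_zero_or_one k with hev | hodd
    · exact ⟨t₁, _, hst.trans (Finset.subset_insert _ _), by omega,
        (by omega : k / 2 + k / 2 = k) ▸ hyy⟩
    · have hxyy := hop (hx.mono (hst.trans (Finset.subset_insert _ _))) hyy
        (Finset.subset_insert _ t₁) (Finset.mem_insert_self _ t₁)
      have := Finset.card_insert_le (op x (op y y)) t₁
      exact ⟨insert (op x (op y y)) t₁, _,
        hst.trans ((Finset.subset_insert _ _).trans (Finset.subset_insert _ _)), by omega,
        (by omega : 1 + (k / 2 + k / 2) = k) ▸ hxyy⟩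

end Str2Term

namespace Str2

open Str2Term

variable {A : Type} [DecidableEq A] {S T B : Str2 A} {c d : ℕ}

def Buildable (S : Str2 A) (c : ℕ) : Prop :=
  ∃ s e, s.card ≤ c ∧ Realizes s e S

theorem Buildable.mono (hS : S.Buildable c) (hcd : c ≤ d) : S.Buildable d :=
  let ⟨s, e, hs, he⟩ := hS
  ⟨s, e, hs.trans hcd, he⟩

theorem Buildable.exists_slp2 (hS : S.Buildable c) :
    ∃ G : SLP2 A, G.WF ∧ G.exp = S ∧ G.size ≤ 2 * c := by
  obtain ⟨s, e, hs, he⟩ := hS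
  refine ⟨e.toSLP2, he.wellFormed.toSLP2_wf, e.toSLP2_exp.trans he.eval_eq, ?_⟩
  calc e.toSLP2.size ≤ 2 * e.subterms.card := e.toSLP2_size
    _ ≤ 2 * c := by gcongr; exact (Finset.card_le_card he.subterms_subset).trans hs

theorem Buildable.isCanonical (hS : S.Buildable c) : S.IsCanonical := by
  obtain ⟨s, e, -, he⟩ := hS
  exact he.eval_eq ▸ e.isCanonical_eval

theorem Buildable.one_le_h (hS : S.Buildable c) : 1 ≤ S.h := by
  obtain ⟨s, e, -, he⟩ := hS
  exact he.eval_eq ▸ e.one_le_eval_h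

theorem Buildable.one_le_w (hS : S.Buildable c) : 1 ≤ S.w := by
  obtain ⟨s, e, -, he⟩ := hS
  exact he.eval_eq ▸ e.one_le_eval_w

theorem Buildable.hcat (hS : S.Buildable c) (hT : T.Buildable d) (hST : S.h = T.h) :
    (S.hcat T).Buildable (c + d + 1) := by
  obtain ⟨s, x, hs, hx⟩ := hS
  obtain ⟨t, y, ht, hy⟩ := hT
  refine ⟨_, _, ?_, (hx.mono Finset.subset_union_left).hcat
    (hy.mono Finset.subset_union_right) hST
    (Finset.subset_insert _ _) (Finset.mem_insert_self _ _)⟩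
  have := Finset.card_union_le s t
  have := Finset.card_insert_le (Str2Term.hcat x y) (s ∪ t)
  omega

theorem Buildable.vcat (hS : S.Buildable c) (hT : T.Buildable d) (hST : S.w = T.w) :
    (S.vcat T).Buildable (c + d + 1) := by
  obtain ⟨s, x, hs, hx⟩ := hS
  obtain ⟨t, y, ht, hy⟩ := hT
  refine ⟨_, _, ?_, (hx.mono Finset.subset_union_left).vcat
    (hy.mono Finset.subset_union_right) hST
    (Finset.subset_insert _ _) (Finset.mem_insert_self _ _)⟩
  have := Finset.card_union_le s t
  have := Finset.card_insert_le (Str2Term.vcat x y) (s ∪ t)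
  omega

theorem Buildable.vrepeat (hS : S.Buildable c) {k : ℕ} (hk : 1 ≤ k) :
    (S.vrepeat k).Buildable (c + 2 * Nat.log 2 k) := by
  have hS1 := hS.isCanonical.vrepeat_one
  obtain ⟨s, x, hs, hx⟩ := hS
  have hx1 : Realizes s x (S.vrepeat 1) := by rwa [hS1]
  obtain ⟨t, y, -, ht, hy⟩ := hx1.exists_of_add (F := S.vrepeat) Str2Term.vcat
    (fun hx hy hst hxy => by rw [vrepeat_add]; exact hx.vcat hy rfl hst hxy) hk
  exact ⟨t, y, by omega, hy⟩

theorem buildable_const (a : A) {h w : ℕ} (hh : 1 ≤ h) (hw : 1 ≤ w) :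
    (const a h w).Buildable (2 * Nat.log 2 h + 2 * Nat.log 2 w + 1) := by
  obtain ⟨t, y, -, ht, hy⟩ := (realizes_char a).exists_of_add (F := fun k => const a k 1)
    Str2Term.vcat
      (fun hx hy hst hxy => by rw [← const_vcat_const]; exact hx.vcat hy rfl hst hxy) hh
  obtain ⟨u, z, -, hu, hz⟩ := hy.exists_of_add (F := fun k => const a h k)
    Str2Term.hcat
      (fun hx hy hst hxy => by rw [← const_hcat_const]; exact hx.hcat hy rfl hst hxy) hw
  exact ⟨u, z, by simp only [Finset.card_singleton] at ht; omega, hz⟩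

theorem Buildable.vcat_const (hS : S.Buildable c) (a : A) (h : ℕ) :
    (S.vcat (const a h S.w)).Buildable (c + 2 * Nat.log 2 h + 2 * Nat.log 2 S.w + 2) := by
  obtain rfl | hh := h.eq_zero_or_pos
  · rw [hS.isCanonical.vcat_const_zero]
    exact hS.mono (by omega)
  · exact (hS.vcat (buildable_const a hh hS.one_le_w) rfl).mono (by omega)

theorem Buildable.const_vcat (hS : S.Buildable c) (a : A) (h : ℕ) :
    ((const a h S.w).vcat S).Buildable (c + 2 * Nat.log 2 h + 2 * Nat.log 2 S.w + 2) := by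
  obtain rfl | hh := h.eq_zero_or_pos
  · rw [hS.isCanonical.const_zero_vcat]
    exact hS.mono (by omega)
  · exact ((buildable_const a hh hS.one_le_w).vcat hS rfl).mono (by omega)

theorem Buildable.hcat_const (hS : S.Buildable c) (a : A) (w : ℕ) :
    (S.hcat (const a S.h w)).Buildable (c + 2 * Nat.log 2 S.h + 2 * Nat.log 2 w + 2) := by
  obtain rfl | hw := w.eq_zero_or_pos
  · rw [hS.isCanonical.hcat_const_zero]
    exact hS.mono (by omega)
  · exact (hS.hcat (buildable_const a hS.one_le_h hw) rfl).mono (by omega)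

theorem Buildable.tiles (hB : B.Buildable c) (z : A) {a q N : ℕ} (hN : 1 ≤ N)
    (hfit : 0 < q → a + B.h * q ≤ N) :
    (tiles z B a q N).Buildable (c + 6 * Nat.log 2 N + 4 * Nat.log 2 B.w + 4) := by
  obtain rfl | hq := q.eq_zero_or_pos
  · rw [tiles_zero]
    exact (buildable_const z hN hB.one_le_w).mono (by omega)
  have hfit := hfit hq
  have hlog {m : ℕ} (hm : m ≤ N) : Nat.log 2 m ≤ Nat.log 2 N := Nat.log_mono_right hm
  have := hlog (m := q) (le_trans (Nat.le_mul_of_pos_left q hB.one_le_h) (by omega))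
  have := hlog (m := a) (by omega)
  have := hlog (m := N - a - B.h * q) (by omega)
  rw [tiles_eq_vcat z B hfit]
  exact (((hB.vrepeat hq).const_vcat z a).vcat_const z _).mono
    (by simp only [vcat_w, const_w, vrepeat_w]; omega)

end Str2

open Str2 Str2Term

@[simp] theorem binStr_h (n : ℕ) : (binStr n).h = 2 ^ n := rfl

/-- `Bin_{2^k}` without its leading column of `$`. -/
def bitTable (k : ℕ) : Str2 Alpha3 :=
  Str2.mk' (2 ^ k) (k + 1) fun i j =>
    some (if j = k then .dollar else if i.testBit (k - 1 - j) then .one else .zero)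

theorem bitTable_zero : bitTable 0 = single .dollar :=
  mk'_congr rfl rfl fun i j _ hj => by simp_all

theorem bitTable_succ (k : ℕ) :
    bitTable (k + 1) = ((const .zero (2 ^ k) 1).hcat (bitTable k)).vcat
      ((const .one (2 ^ k) 1).hcat (bitTable k)) := by
  refine mk'_congr (by simp only [pow_succ, bitTable, hcat_h, const_h]; omega)
    (by simp only [bitTable, hcat_w, const_w, mk'_w]; omega)
    fun i j hi hj => ?_
  simp only [Str2.hcat, bitTable, const, mk'_f, mk'_h, mk'_w, show j < 1 + (k + 1) by omega,
    and_true]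
  rcases lt_or_ge i (2 ^ k) with hik | hik
  · rcases j with _ | j
    · simp [hik, Nat.testBit_lt_two_pow hik]
    · have : k - (j + 1) = k - 1 - j := by omega
      simp [hik, this, (by omega : j ≤ k)]
  · obtain ⟨i, rfl⟩ := Nat.exists_eq_add_of_le hik
    have hi' : i < 2 ^ k := by rw [pow_succ] at hi; omega
    rcases j with _ | j
    · simp [hi', Nat.testBit_two_pow_add_eq, Nat.testBit_lt_two_pow hi']
    · by_cases hjk : j = k
      · simp [hjk, hi']
      · rw [Nat.testBit_two_pow_add_gt (by omega : k + 1 - 1 - (j + 1) < k)]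
        have : k - (j + 1) = k - 1 - j := by omega
        simp [hi', hjk, this, (by omega : j ≤ k)]

theorem binStr_eq_hcat (n : ℕ) : binStr n = (const .dollar (2 ^ n) 1).hcat (bitTable n) := by
  refine mk'_congr rfl (by simp only [const_w, bitTable, mk'_w]; omega) fun i j hi hj => ?_
  simp only [bitTable, const, mk'_f, mk'_w]
  rcases j with _ | j
  · simp [hi]
  · have : n - 1 - j = n - (j + 1) := by omega
    simp [hi, this, (by omega : j ≤ n)]

@[simp] theorem shiftBinStr_h (n : ℕ) : (shiftBinStr n).h = 2 * 2 ^ n := rfl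
@[simp] theorem shiftBinStr_w (n : ℕ) : (shiftBinStr n).w = 2 ^ n * (n + 2) := rfl

/-- `ShiftBin_{2^n}` cut to its first `2^k` column blocks and first `2^n + 2^k` rows. -/
def shiftTable (n k : ℕ) : Str2 Alpha3 :=
  Str2.mk' (2 ^ n + 2 ^ k) (2 ^ k * (n + 2)) fun r c =>
    if c / (n + 2) ≤ r ∧ r < c / (n + 2) + 2 ^ n then
      (binStr n).f (r - c / (n + 2)) (c % (n + 2))
    else some .zero

theorem shiftBinStr_eq_shiftTable (n : ℕ) : shiftBinStr n = shiftTable n n :=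
  mk'_congr (two_mul _) rfl fun _ _ _ _ => rfl

theorem shiftTable_zero (n : ℕ) :
    shiftTable n 0 = (binStr n).vcat (const .zero 1 (n + 2)) := by
  refine mk'_congr (by simp [binStr]) (by simp [binStr]) fun r c hr hc => ?_
  have hc0 : c / (n + 2) = 0 := Nat.div_eq_of_lt (by simpa using hc)
  simp only [pow_zero, one_mul] at hr hc
  simp only [const, mk'_f, binStr_h, hc0, Nat.mod_eq_of_lt hc]
  grind

theorem shiftTable_succ (n k : ℕ) :
    shiftTable n (k + 1) =
      ((shiftTable n k).vcat (const .zero (2 ^ k) (2 ^ k * (n + 2)))).hcat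
        ((const .zero (2 ^ k) (2 ^ k * (n + 2))).vcat (shiftTable n k)) := by
  refine mk'_congr (by simp only [pow_succ, shiftTable, vcat_h, mk'_h, const_h]; omega)
    (by simp only [shiftTable, vcat_w, mk'_w, const_w]; ring)
    fun r c hr hc => ?_
  simp only [Str2.vcat, shiftTable, const, mk'_f, mk'_h, mk'_w]
  have hW : 2 ^ (k + 1) * (n + 2) = 2 ^ k * (n + 2) + 2 ^ k * (n + 2) := by ring
  by_cases hcW : c < 2 ^ k * (n + 2)
  · have hi : c / (n + 2) < 2 ^ k := Nat.div_lt_of_lt_mul (by rwa [mul_comm])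
    simp only [hcW]
    grind
  · -- column block `2^k + i` is block `i` moved down by `2^k` rows
    obtain ⟨c, rfl⟩ := Nat.exists_eq_add_of_le (not_lt.mp hcW)
    have hdiv : (2 ^ k * (n + 2) + c) / (n + 2) = 2 ^ k + c / (n + 2) := by
      rw [Nat.mul_comm, Nat.mul_add_div (by omega)]
    have hmod : (2 ^ k * (n + 2) + c) % (n + 2) = c % (n + 2) := by simp
    simp only [hcW, hdiv, hmod]
    grind

theorem exists_realizes_bitTable (k : ℕ) :
    ∃ (s : Finset (Str2Term Alpha3)) (z o t : Str2Term Alpha3), s.card ≤ 5 * k + 3 ∧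
      Realizes s z (const .zero (2 ^ k) 1) ∧ Realizes s o (const .one (2 ^ k) 1) ∧
      Realizes s t (bitTable k) := by
  induction k with
  | zero =>
    refine ⟨{char .zero, char .one, char .dollar}, char .zero, char .one, char .dollar,
      Finset.card_le_three, (realizes_char _).mono (by simp), (realizes_char _).mono (by simp),
      ?_⟩
    rw [bitTable_zero]
    exact (realizes_char _).mono (by simp)
  | succ k ih =>
    obtain ⟨s, z, o, t, hs, hz, ho, ht⟩ := ih
    let zt := Str2Term.hcat z t
    let ot := Str2Term.hcat o t
    let P := {vcat z z, vcat o o, zt, ot, vcat zt ot} ∪ s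
    have hsP : s ⊆ P := Finset.subset_union_right
    have hcard : P.card ≤ 5 * (k + 1) + 3 :=
      calc _ ≤ 5 + s.card :=
            (Finset.card_union_le _ _).trans (Nat.add_le_add_right Finset.card_le_five _)
        _ ≤ _ := by omega
    refine ⟨P, vcat z z, vcat o o, vcat zt ot, hcard, ?_, ?_, ?_⟩
    · rw [pow_succ, mul_two, ← const_vcat_const]
      exact hz.vcat hz rfl hsP (by simp [P])
    · rw [pow_succ, mul_two, ← const_vcat_const]
      exact ho.vcat ho rfl hsP (by simp [P])
    · rw [bitTable_succ]
      exact (hz.hcat ht rfl hsP (by simp [P, zt])).vcat (ho.hcat ht rfl hsP (by simp [P, ot]))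
        (by simp [bitTable]) subset_rfl (by simp [P, zt, ot])

theorem buildable_binStr (n : ℕ) : (binStr n).Buildable (7 * n + 5) := by
  obtain ⟨s, -, -, t, hs, -, -, ht⟩ := exists_realizes_bitTable n
  rw [binStr_eq_hcat]
  refine ((buildable_const .dollar Nat.one_le_two_pow le_rfl).hcat ⟨s, t, hs, ht⟩ rfl).mono ?_
  rw [Nat.log_pow one_lt_two, Nat.log_one_right]
  omega

theorem exists_realizes_shiftTable (n k : ℕ) :
    ∃ (s : Finset (Str2Term Alpha3)) (d z : Str2Term Alpha3), s.card ≤ 9 * n + 11 + 5 * k ∧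
      Realizes s d (shiftTable n k) ∧ Realizes s z (const .zero (2 ^ k) (2 ^ k * (n + 2))) := by
  induction k with
  | zero =>
    obtain ⟨s, b, hs, hb⟩ := buildable_binStr n
    obtain ⟨t, z, ht, hz⟩ := buildable_const Alpha3.zero le_rfl (by omega : 1 ≤ n + 2)
    have := Nat.log_le_self 2 (n + 2)
    have := Finset.card_union_le s t
    refine ⟨insert (vcat b z) (s ∪ t), vcat b z, z, ?_, ?_, ?_⟩
    · have := Finset.card_insert_le (vcat b z) (s ∪ t)
      simp only [Nat.log_one_right, mul_zero, zero_add] at ht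
      omega
    · rw [shiftTable_zero]
      exact (hb.mono Finset.subset_union_left).vcat (hz.mono Finset.subset_union_right) rfl
        (Finset.subset_insert _ _) (Finset.mem_insert_self _ _)
    · simpa using hz.mono ((Finset.subset_union_right).trans (Finset.subset_insert _ _))
  | succ k ih =>
    obtain ⟨s, d, z, hs, hd, hz⟩ := ih
    let dz := vcat d z
    let zd := vcat z d
    let zz := Str2Term.hcat z z
    let P := {dz, zd, Str2Term.hcat dz zd, zz, vcat zz zz} ∪ s
    have hsP : s ⊆ P := Finset.subset_union_right
    have hcard : P.card ≤ 9 * n + 11 + 5 * (k + 1) :=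
      calc _ ≤ 5 + s.card :=
            (Finset.card_union_le _ _).trans (Nat.add_le_add_right Finset.card_le_five _)
        _ ≤ _ := by omega
    refine ⟨P, Str2Term.hcat dz zd, vcat zz zz, hcard, ?_, ?_⟩
    · rw [shiftTable_succ]
      exact (hd.vcat hz rfl hsP (by simp [P, dz])).hcat (hz.vcat hd rfl hsP (by simp [P, zd]))
        (by simp only [shiftTable, vcat_h, mk'_h, const_h]; omega) subset_rfl
        (by simp [P, dz, zd])
    · have hzz := hz.hcat hz rfl hsP (by simp [P, zz])
      rw [const_hcat_const] at hzz
      have := hzz.vcat hzz rfl subset_rfl (by simp [P, zz])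
      rw [const_vcat_const] at this
      convert this using 2 <;> ring

theorem buildable_shiftBinStr (n : ℕ) : (shiftBinStr n).Buildable (14 * n + 11) := by
  obtain ⟨s, d, -, hs, hd, -⟩ := exists_realizes_shiftTable n n
  exact ⟨s, d, by omega, shiftBinStr_eq_shiftTable n ▸ hd⟩

theorem two_mul_two_pow_mExp_le {M : ℕ} (hM : 4 ≤ M) : 2 * 2 ^ mExp M * (mExp M + 2) ≤ M :=
  Nat.findGreatest_spec (P := fun m => 2 * 2 ^ m * (m + 2) ≤ M) (Nat.zero_le M)
    (by simpa using hM)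

theorem log_two_pow_mul_lt (n : ℕ) : Nat.log 2 (2 ^ n * (n + 2)) < 2 * n + 2 := by
  refine Nat.log_lt_of_lt_pow (by positivity) ?_
  calc 2 ^ n * (n + 2) < 2 ^ n * 2 ^ (n + 2) := by gcongr; exact Nat.lt_two_pow_self
    _ = 2 ^ (2 * n + 2) := by ring

theorem gadgetC_eq_hcat {N M n : ℕ} (hn : mExp M = n) (hM : 2 * 2 ^ n * (n + 2) ≤ M) :
    gadgetC N M =
      ((tiles .zero (shiftBinStr n) 0 (N / (2 * 2 ^ n)) N).hcat
        (tiles .zero (shiftBinStr n) (2 ^ n) ((N - 2 ^ n) / (2 * 2 ^ n)) N)).hcat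
        (const .zero N (M - 2 * 2 ^ n * (n + 2))) := by
  subst hn
  refine mk'_congr rfl (by
    simp only [hcat_w, tiles, mk'_w, const_w, shiftBinStr_w]
    rw [mul_assoc] at hM ⊢
    omega) fun r c hr hc => ?_
  simp only [Str2.hcat, tiles, const, mk'_f, mk'_h, mk'_w, shiftBinStr]
  grind

/-- There is an absolute constant `c > 0` such that for all
integers `N ≥ 1` and `M ≥ 4`, there is a 2D SLP of size at most
`c * (log₂ N + log₂ M)` deriving the 2D string `C_{N,M}`. -/
theorem gadget_small_slp :
    ∃ c : ℕ, 0 < c ∧ ∀ N M : ℕ, 1 ≤ N → 4 ≤ M →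
      ∃ G : SLP2 Alpha3, G.WF ∧ G.exp = gadgetC N M ∧
        G.size ≤ c * (Nat.log 2 N + Nat.log 2 M) := by
  refine ⟨134, by norm_num, fun N M hN hM => ?_⟩
  set n := mExp M with hn
  have hW := two_mul_two_pow_mExp_le hM
  have hnM : n ≤ Nat.log 2 M :=
    Nat.le_log_of_pow_le one_lt_two (le_trans (by nlinarith [Nat.one_le_two_pow (n := n)]) hW)
  have hM2 : 2 ≤ Nat.log 2 M := Nat.le_log_of_pow_le one_lt_two hM
  have hB := buildable_shiftBinStr n
  have hL := hB.tiles .zero (a := 0) (q := N / (2 * 2 ^ n)) hN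
    fun _ => by simpa using Nat.mul_div_le N (2 * 2 ^ n)
  have hR := hB.tiles .zero (a := 2 ^ n) (q := (N - 2 ^ n) / (2 * 2 ^ n)) hN fun hq => by
    have := Nat.mul_div_le (N - 2 ^ n) (2 * 2 ^ n)
    have := Nat.le_mul_of_pos_right (2 * 2 ^ n) hq
    simp only [shiftBinStr_h]
    omega
  obtain ⟨G, hG, hGexp, hGsize⟩ :=
    ((hL.hcat hR rfl).hcat_const .zero (M - 2 * 2 ^ n * (n + 2))).exists_slp2
  refine ⟨G, hG, hGexp.trans (gadgetC_eq_hcat hn.symm hW).symm, hGsize.trans ?_⟩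
  have := Nat.log_mono_right (b := 2) (Nat.sub_le M (2 * 2 ^ n * (n + 2)))
  have := log_two_pow_mul_lt n
  simp only [shiftBinStr_w, tiles, hcat_h, mk'_h]
  omega
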